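/- For every integer n with 1 ≤ n ≤ 25, the polynomial D_n(t) = t^9 - (n+3)t^8 - (n-4)t^7 + (2n-8)t^6 + (2n+8)t^5 + (2n-8)t^4 - (2n-11)t^3 + (3n-5)t^2 + (3n+4)t - 4(n+1) has no negative real roots. -/
import Mathlib

open Polynomial

/-- The denominator polynomial `D_n(t)`, over `ℝ`. -/
noncomputable def Dpoly (n : ℕ) : Polynomial ℝ :=
  X ^ 9 - C ((n : ℝ) + 3) * X ^ 8 - C ((n : ℝ) - 4) * X ^ 7 + C (2 * (n : ℝ) - 8) * X ^ 6
    + C (2 * (n : ℝ) + 8) * X ^ 5 + C (2 * (n : ℝ) - 8) * X ^ 4 - C (2 * (n : ℝ) - 11) * X ^ 3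
    + C (3 * (n : ℝ) - 5) * X ^ 2 + C (3 * (n : ℝ) + 4) * X - C (4 * ((n : ℝ) + 1))

private lemma q1_pos (s : ℝ) (hs : 0 < s) :
    0 < s^9+4*s^8+3*s^7+6*s^6+10*s^5+6*s^4+9*s^3+2*s^2+7*s+8 := by
  positivity

private lemma q25_pos (s : ℝ) (hs : 0 < s) :
    0 < s^9+28*s^8-21*s^7-42*s^6+58*s^5-42*s^4-39*s^3-70*s^2+79*s+104 := by
  nlinarith [sq_nonneg (s-13/10), sq_nonneg (s^2-2*s), mul_pos hs hs, sq_nonneg (s^4-s^3),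
    sq_nonneg (s^3-2*s^2), mul_pos (mul_pos hs hs) hs, sq_nonneg (s^2-13/10*s),
    sq_nonneg (s^3-13/10*s^2)]

theorem stmt_5 (n : ℕ) (h1 : 1 ≤ n) (h25 : n ≤ 25) (t : ℝ) (ht : t < 0) :
    ¬ (Dpoly n).IsRoot t := by
  intro h
  simp only [Dpoly, IsRoot.def, eval_add, eval_sub, eval_mul, eval_pow, eval_C, eval_X] at h
  have hn1 : (1:ℝ) ≤ (n:ℝ) := by exact_mod_cast h1
  have hn25 : ((n:ℝ):ℝ) ≤ 25 := by exact_mod_cast h25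
  have hA := q1_pos (-t) (by linarith)
  have hB := q25_pos (-t) (by linarith)
  have key : (25-(n:ℝ)) * ((-t)^9+4*(-t)^8+3*(-t)^7+6*(-t)^6+10*(-t)^5+6*(-t)^4+9*(-t)^3+2*(-t)^2+7*(-t)+8)
      + ((n:ℝ)-1) * ((-t)^9+28*(-t)^8-21*(-t)^7-42*(-t)^6+58*(-t)^5-42*(-t)^4-39*(-t)^3-70*(-t)^2+79*(-t)+104)
      = -24 * (t ^ 9 - ((n : ℝ) + 3) * t ^ 8 - ((n : ℝ) - 4) * t ^ 7 + (2 * (n : ℝ) - 8) * t ^ 6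
        + (2 * (n : ℝ) + 8) * t ^ 5 + (2 * (n : ℝ) - 8) * t ^ 4 - (2 * (n : ℝ) - 11) * t ^ 3
        + (3 * (n : ℝ) - 5) * t ^ 2 + (3 * (n : ℝ) + 4) * t - 4 * ((n : ℝ) + 1)) := by
    ring
  rcases eq_or_lt_of_le hn1 with he | hlt
  · have h24 : (25-(n:ℝ)) = 24 := by rw [← he]; norm_num
    nlinarith [h, key, hA]
  · have h0 : 0 ≤ (25-(n:ℝ)) := by linarith
    have hpos : 0 < ((n:ℝ)-1) := by linarith
    nlinarith [h, key, mul_nonneg h0 hA.le, mul_pos hpos hB]
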